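/- Let f_m(n) = 1 if H(n) ≤ m, else 0 (with f_0(α) = 1 iff α ∈ {0,1}), and define the multiplicative function 𝓕_m(n) = ∏_{p^α ∥ n} (f_{m-1}(α) − f_{m-1}(α−1)) for m ≥ 1. Then for all n ≥ 1 and m ≥ 1, the identity ∑_{d ∣ n} 𝓕_m(d) = f_m(n) holds. -/

import Mathlib

/-- Tetration base 2: `tet 0 = 1`, `tet (m+1) = 2 ^ tet m`. -/
def tet : ℕ → ℕ
  | 0 => 1
  | m + 1 => 2 ^ tet m

/-- Height of the super-factorization tree of `n`:
`H 1 = 0` and `H n = 1 + max_{p^α ∥ n} H α` for `n > 1`. -/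
def H : ℕ → ℕ
  | n =>
    if h : n ≤ 1 then 0
    else 1 + (n.primeFactors.attach.sup fun p => H (n.factorization p.1))
decreasing_by
  exact Nat.factorization_lt _ (by omega)

/-- `f m n` = 1 if `H n ≤ m`, else 0. -/
def f (m n : ℕ) : ℤ := if H n ≤ m then 1 else 0

/-- `F m n = ∏_{p^α ∥ n} (f (m-1) α - f (m-1) (α-1))`. -/
def F (m n : ℕ) : ℤ :=
  ∏ p ∈ n.primeFactors, (f (m - 1) (n.factorization p) - f (m - 1) (n.factorization p - 1))

/-!
Every `d ∣ n` is determined by its exponents `β_p ≤ α_p`, and `𝓕_m` is a product over those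
exponents, so `∑_{d ∣ n} 𝓕_m(d)` factors into the product over `p^α ∥ n` of the telescoping sums
`1 + ∑_{1 ≤ β ≤ α} (f_{m-1}(β) - f_{m-1}(β-1)) = f_{m-1}(α)`, using `f_{m-1}(0) = 1`.
Finally `∏_{p^α ∥ n} f_{m-1}(α) = f_m(n)`, because `H(n) ≤ m` exactly when `H(α) ≤ m - 1` for
every `p^α ∥ n`.
-/

open ArithmeticFunction Finset
open scoped ArithmeticFunction.zeta

section ExponentProd

variable {R : Type*} [CommMonoidWithZero R] (g : ℕ → R)

def exponentProd : ArithmeticFunction R :=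
  ⟨fun n => if n = 0 then 0 else n.factorization.prod fun _ k => g k, if_pos rfl⟩

lemma exponentProd_apply {n : ℕ} (hn : n ≠ 0) :
    exponentProd g n = n.factorization.prod fun _ k => g k :=
  if_neg hn

lemma isMultiplicative_exponentProd : (exponentProd g).IsMultiplicative := by
  refine IsMultiplicative.iff_ne_zero.mpr ⟨by simp [exponentProd_apply], fun ha hb hab => ?_⟩
  rw [exponentProd_apply g (mul_ne_zero ha hb), exponentProd_apply g ha, exponentProd_apply g hb,
    Nat.factorization_mul_of_coprime hab,
    Finsupp.prod_add_index_of_disjoint (by simpa using hab.disjoint_primeFactors)]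

lemma exponentProd_apply_prime_pow {p k : ℕ} (hp : p.Prime) (hk : k ≠ 0) :
    exponentProd g (p ^ k) = g k := by
  rw [exponentProd_apply g (pow_ne_zero k hp.ne_zero), Nat.prod_factorization_eq_prod_primeFactors,
    Nat.primeFactors_prime_pow hk hp, prod_singleton, hp.factorization_pow,
    Finsupp.single_eq_same]

end ExponentProd

theorem sum_divisors_exponentProd_sub {R : Type*} [CommRing R] {a : ℕ → R} (ha : a 0 = 1)
    {n : ℕ} (hn : n ≠ 0) :
    ∑ d ∈ n.divisors, exponentProd (fun k => a k - a (k - 1)) d =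
      ∏ p ∈ n.primeFactors, a (n.factorization p) := by
  set Φ := exponentProd fun k => a k - a (k - 1)
  have hΦ := isMultiplicative_exponentProd fun k => a k - a (k - 1)
  have hmul : ((ζ : ArithmeticFunction R) * Φ).IsMultiplicative :=
    isMultiplicative_zeta.natCast.mul hΦ
  rw [← coe_zeta_mul_apply, hmul.multiplicative_factorization _ hn]
  refine prod_congr rfl fun p hp_mem => ?_
  have hp := Nat.prime_of_mem_primeFactors hp_mem
  have hΦ_succ (i : ℕ) : Φ (p ^ (i + 1)) = a (i + 1) - a i :=
    exponentProd_apply_prime_pow _ hp i.succ_ne_zero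
  dsimp only
  rw [coe_zeta_mul_apply, Nat.sum_divisors_prime_pow hp, sum_range_succ', pow_zero, hΦ.map_one]
  simp only [hΦ_succ, sum_range_sub, ha, sub_add_cancel]

lemma H_of_le_one {n : ℕ} (hn : n ≤ 1) : H n = 0 := by
  rw [H, dif_pos hn]

lemma H_of_one_lt {n : ℕ} (hn : 1 < n) :
    H n = 1 + n.primeFactors.sup fun p => H (n.factorization p) := by
  rw [H, dif_neg (by omega), sup_attach n.primeFactors fun p => H (n.factorization p)]

lemma H_le_succ_iff {m n : ℕ} :
    H n ≤ m + 1 ↔ ∀ p ∈ n.primeFactors, H (n.factorization p) ≤ m := by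
  rcases le_or_gt n 1 with hn | hn
  · have : n.primeFactors = ∅ := by interval_cases n <;> simp
    simp [H_of_le_one hn, this]
  · rw [H_of_one_lt hn, ← Finset.sup_le_iff]
    omega

lemma f_zero_right (m : ℕ) : f m 0 = 1 :=
  if_pos (by simp [H_of_le_one])

lemma f_succ_eq_prod (m n : ℕ) : f (m + 1) n = ∏ p ∈ n.primeFactors, f m (n.factorization p) := by
  simp only [f, prod_boole, H_le_succ_iff]

lemma F_succ_eq_exponentProd (m : ℕ) {n : ℕ} (hn : n ≠ 0) :
    F (m + 1) n = exponentProd (fun k => f m k - f m (k - 1)) n := by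
  rw [exponentProd_apply _ hn]
  rfl

theorem stmt5 (m n : ℕ) (hm : 1 ≤ m) (hn : 1 ≤ n) :
    ∑ d ∈ n.divisors, F m d = f m n := by
  obtain ⟨m, rfl⟩ := Nat.exists_eq_add_of_le' hm
  rw [sum_congr rfl fun d hd => F_succ_eq_exponentProd m ((Nat.pos_of_mem_divisors hd).ne'),
    sum_divisors_exponentProd_sub (f_zero_right m) (by omega), f_succ_eq_prod]
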